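/- arXiv:1911.03360 — 3 statements merged into one kernel-verified Lean document; each statement's English description precedes it below -/
import Mathlib

section
/- Let G = (V,E) be an undirected connected graph with positive edge weights, S ⊆ V a nonempty group, and v ∈ V \ S. Let B_S be the shortest-path DAG rooted at S (edges (x,y) with dist(S,y) = dist(S,x) + w(x,y)), and let D_v be the set of vertices reachable from v in B_S. Then f(S) − f(S ∪ {v}) ≥ |D_v| · dist(S,v), where f(T) = Σ_{x ∈ V\T} dist(T,x) is the farness of T. -/
open SimpleGraph Finset

/-- Total weight of a walk. -/
noncomputable def walkWeight {V : Type*} {G : SimpleGraph V} (w : V → V → ℝ) :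
    {x y : V} → G.Walk x y → ℝ
  | _, _, SimpleGraph.Walk.nil => 0
  | _, _, @SimpleGraph.Walk.cons _ _ a b _ _ p => w a b + walkWeight w p

/-- Weighted shortest-path distance between two vertices. -/
noncomputable def wdist {V : Type*} (G : SimpleGraph V) (w : V → V → ℝ) (x y : V) : ℝ :=
  sInf {r | ∃ p : G.Walk x y, walkWeight w p = r}

/-- Weighted distance from a group `S` to a vertex `x`. -/
noncomputable def wsetDist {V : Type*} (G : SimpleGraph V) (w : V → V → ℝ)
    (S : Finset V) (x : V) : ℝ :=
  sInf {r | ∃ s ∈ S, wdist G w s x = r}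

/-- Weighted farness of a group `S`. -/
noncomputable def wFarness {V : Type*} [Fintype V] [DecidableEq V]
    (G : SimpleGraph V) (w : V → V → ℝ) (S : Finset V) : ℝ :=
  ∑ x ∈ Sᶜ, wsetDist G w S x

/-- Edge relation of the weighted shortest-path DAG rooted at `S`. -/
def wdagEdge {V : Type*} (G : SimpleGraph V) (w : V → V → ℝ) (S : Finset V) (x y : V) : Prop :=
  G.Adj x y ∧ wsetDist G w S y = wsetDist G w S x + w x y

/-- Vertices reachable from `v` in the weighted shortest-path DAG rooted at `S`. -/
def wreach {V : Type*} (G : SimpleGraph V) (w : V → V → ℝ) (S : Finset V) (v : V) : Set V :=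
  {x | Relation.ReflTransGen (wdagEdge G w S) v x}

/-!
Every vertex `x` reachable from `v` in `B_S` satisfies `d_S(x) ≥ d_S(v) + d(v, x)`, and
`d(v, x) ≥ d_{S ∪ {v}}(x)`, so adding `v` to `S` shortens the distance to `x` by at least
`d_S(v)`; no distance increases. Since both farnesses vanish on their own group, the drop in
farness is the sum over all vertices of these gains, which is at least `|D_v| · d_S(v)`.
-/

namespace WeightedGraph

variable {V : Type*} {G : SimpleGraph V} {w : V → V → ℝ}

section Walks

lemma walkWeight_nonneg (hw : ∀ x y, G.Adj x y → 0 ≤ w x y) :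
    ∀ {x y : V} (p : G.Walk x y), 0 ≤ walkWeight w p
  | _, _, .nil => le_rfl
  | _, _, .cons h p => add_nonneg (hw _ _ h) (walkWeight_nonneg hw p)

lemma walkWeight_append :
    ∀ {x y z : V} (p : G.Walk x y) (q : G.Walk y z),
      walkWeight w (p.append q) = walkWeight w p + walkWeight w q
  | _, _, _, .nil, q => by simp [walkWeight]
  | _, _, _, .cons h p, q => by
      simp only [Walk.cons_append, walkWeight, walkWeight_append p q, add_assoc]

end Walks

section Distance

lemma bddBelow_range_walkWeight (hw : ∀ x y, G.Adj x y → 0 ≤ w x y) (x y : V) :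
    BddBelow (Set.range (walkWeight (G := G) w (x := x) (y := y))) :=
  ⟨0, by rintro _ ⟨p, rfl⟩; exact walkWeight_nonneg hw p⟩

lemma wdist_le_walkWeight (hw : ∀ x y, G.Adj x y → 0 ≤ w x y) {x y : V} (p : G.Walk x y) :
    wdist G w x y ≤ walkWeight w p :=
  ciInf_le (bddBelow_range_walkWeight hw x y) p

lemma wdist_nonneg (hw : ∀ x y, G.Adj x y → 0 ≤ w x y) (x y : V) : 0 ≤ wdist G w x y :=
  Real.iInf_nonneg fun p => walkWeight_nonneg hw p

lemma wdist_self (hw : ∀ x y, G.Adj x y → 0 ≤ w x y) (x : V) : wdist G w x x = 0 :=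
  le_antisymm (wdist_le_walkWeight hw .nil) (wdist_nonneg hw x x)

lemma wdist_le_of_adj (hw : ∀ x y, G.Adj x y → 0 ≤ w x y)
    {x y : V} (h : G.Adj x y) : wdist G w x y ≤ w x y := by
  simpa [walkWeight] using wdist_le_walkWeight hw (.cons h .nil)

lemma wdist_triangle (hw : ∀ x y, G.Adj x y → 0 ≤ w x y)
    {x y z : V} (hxy : G.Reachable x y) (hyz : G.Reachable y z) :
    wdist G w x z ≤ wdist G w x y + wdist G w y z := by
  have : Nonempty (G.Walk x y) := hxy
  have : Nonempty (G.Walk y z) := hyz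
  refine le_ciInf_add_ciInf fun p q => ?_
  rw [← walkWeight_append]
  exact wdist_le_walkWeight hw _

end Distance

section SetDistance

variable {S T : Finset V}

lemma wsetDist_eq_inf' (hS : S.Nonempty) (x : V) :
    wsetDist G w S x = S.inf' hS (wdist G w · x) := by
  rw [Finset.inf'_eq_csInf_image]
  rfl

lemma wsetDist_le_wdist {s : V} (hs : s ∈ S) (x : V) : wsetDist G w S x ≤ wdist G w s x := by
  rw [wsetDist_eq_inf' ⟨s, hs⟩]
  exact Finset.inf'_le _ hs

lemma wsetDist_anti (hS : S.Nonempty) (hST : S ⊆ T) (x : V) :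
    wsetDist G w T x ≤ wsetDist G w S x := by
  rw [wsetDist_eq_inf' hS, wsetDist_eq_inf' (hS.mono hST)]
  exact Finset.inf'_mono _ hST hS

lemma wsetDist_of_mem (hw : ∀ x y, G.Adj x y → 0 ≤ w x y)
    {s : V} (hs : s ∈ S) : wsetDist G w S s = 0 :=
  le_antisymm ((wsetDist_le_wdist hs s).trans_eq (wdist_self hw s))
    (Real.sInf_nonneg <| by rintro _ ⟨t, -, rfl⟩; exact wdist_nonneg hw t s)

lemma wFarness_eq_sum [Fintype V] [DecidableEq V]
    (hw : ∀ x y, G.Adj x y → 0 ≤ w x y) (S : Finset V) :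
    wFarness G w S = ∑ x, wsetDist G w S x := by
  rw [wFarness, ← Finset.sum_compl_add_sum S,
    Finset.sum_eq_zero fun s hs => wsetDist_of_mem hw hs, add_zero]

lemma add_wdist_le_wsetDist_of_mem_wreach (hw : ∀ x y, G.Adj x y → 0 ≤ w x y)
    (hconn : G.Connected) {v x : V} (hx : x ∈ wreach G w S v) :
    wsetDist G w S v + wdist G w v x ≤ wsetDist G w S x := by
  induction hx with
  | refl => rw [wdist_self hw, add_zero]
  | @tail y z _ hyz ih =>
    obtain ⟨hadj, hdist⟩ := hyz
    have htri := wdist_triangle hw (hconn v y) hadj.reachable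
    have hedge := wdist_le_of_adj hw hadj
    rw [hdist]
    linarith

lemma wsetDist_le_sub_wsetDist_insert [DecidableEq V] (hw : ∀ x y, G.Adj x y → 0 ≤ w x y)
    (hconn : G.Connected) {v x : V} (hx : x ∈ wreach G w S v) :
    wsetDist G w S v ≤ wsetDist G w S x - wsetDist G w (insert v S) x := by
  have hreach := add_wdist_le_wsetDist_of_mem_wreach hw hconn hx
  have hv := wsetDist_le_wdist (G := G) (w := w) (S.mem_insert_self v) x
  linarith

end SetDistance

end WeightedGraph

open WeightedGraph in
theorem stmt0_general {V : Type*} [Fintype V] [DecidableEq V] (G : SimpleGraph V)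
    (hconn : G.Connected) (w : V → V → ℝ)
    (hpos : ∀ x y, G.Adj x y → 0 < w x y)
    (S : Finset V) (hS : S.Nonempty) (v : V) :
    wFarness G w S - wFarness G w (insert v S) ≥
      ((wreach G w S v).ncard : ℝ) * wsetDist G w S v := by
  have hw : ∀ x y, G.Adj x y → 0 ≤ w x y := fun x y h => (hpos x y h).le
  set D := (wreach G w S v).toFinite.toFinset
  calc ((wreach G w S v).ncard : ℝ) * wsetDist G w S v
      = ∑ _x ∈ D, wsetDist G w S v := by
        rw [Set.ncard_eq_toFinset_card _ (wreach G w S v).toFinite, Finset.sum_const,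
          nsmul_eq_mul]
    _ ≤ ∑ x ∈ D, (wsetDist G w S x - wsetDist G w (insert v S) x) :=
        Finset.sum_le_sum fun x hx =>
          wsetDist_le_sub_wsetDist_insert hw hconn ((Set.Finite.mem_toFinset _).1 hx)
    _ ≤ ∑ x, (wsetDist G w S x - wsetDist G w (insert v S) x) :=
        Finset.sum_le_sum_of_subset_of_nonneg D.subset_univ fun x _ _ =>
          sub_nonneg.2 (wsetDist_anti hS (S.subset_insert v) x)
    _ = wFarness G w S - wFarness G w (insert v S) := by
        rw [wFarness_eq_sum hw, wFarness_eq_sum hw, Finset.sum_sub_distrib]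

theorem stmt0 {V : Type*} [Fintype V] [DecidableEq V] (G : SimpleGraph V)
    (hconn : G.Connected) (w : V → V → ℝ)
    (hpos : ∀ x y, G.Adj x y → 0 < w x y) (hsym : ∀ x y, w x y = w y x)
    (S : Finset V) (hS : S.Nonempty) (v : V) (hv : v ∉ S) :
    wFarness G w S - wFarness G w (insert v S) ≥
      ((wreach G w S v).ncard : ℝ) * wsetDist G w S v :=
  stmt0_general G hconn w hpos S hS v
end

section
/- Let G = (V,E) be an undirected connected unweighted graph, S ⊆ V nonempty, and let v ∈ V \ S be a neighbor of S (i.e., dist(S,v) = 1). Let D_v be the set of vertices reachable from v in the BFS DAG B_S rooted at S. Then f(S) − f(S ∪ {v}) = |D_v| · dist(S,v) = |D_v|. -/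
open SimpleGraph Finset

/-- Distance from a group `S` to a vertex `x` in an unweighted graph. -/
noncomputable def setDist {V : Type*} (G : SimpleGraph V) (S : Finset V) (x : V) : ℕ :=
  sInf {d | ∃ s ∈ S, G.dist s x = d}

/-- Farness of a group `S`. -/
noncomputable def farness {V : Type*} [Fintype V] [DecidableEq V]
    (G : SimpleGraph V) (S : Finset V) : ℕ :=
  ∑ x ∈ Sᶜ, setDist G S x

/-- Edge relation of the BFS DAG rooted at `S`. -/
def bfsEdge {V : Type*} (G : SimpleGraph V) (S : Finset V) (x y : V) : Prop :=
  G.Adj x y ∧ setDist G S y = setDist G S x + 1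

/-- Vertices reachable from `v` in the BFS DAG rooted at `S` (including `v`). -/
def reach {V : Type*} (G : SimpleGraph V) (S : Finset V) (v : V) : Set V :=
  {x | Relation.ReflTransGen (bfsEdge G S) v x}

/-!
Adding a neighbour `v` of `S` (so `setDist G S v = 1`) changes the distance to a vertex `x` from
`d = setDist G S x` to `min (dist v x) d`, and `d ≤ 1 + dist v x` by the triangle inequality through
`v`. So the distance drops, by exactly one, precisely when `d = 1 + dist v x`, i.e. when some
shortest path from `v` to `x` climbs one BFS level per edge: these are the vertices of `D_v`.
-/

section SetDist

variable {V : Type*} {G : SimpleGraph V} {S : Finset V}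

lemma exists_mem_dist_eq_setDist (hS : S.Nonempty) (x : V) :
    ∃ s ∈ S, G.dist s x = setDist G S x := by
  obtain ⟨s, hs⟩ := hS
  exact Nat.sInf_mem (⟨G.dist s x, s, hs, rfl⟩ : {d | ∃ s ∈ S, G.dist s x = d}.Nonempty)

lemma setDist_le_dist {s : V} (hs : s ∈ S) (x : V) : setDist G S x ≤ G.dist s x :=
  Nat.sInf_le ⟨s, hs, rfl⟩

lemma setDist_eq_zero_of_mem {x : V} (hx : x ∈ S) : setDist G S x = 0 := by
  simpa using setDist_le_dist (G := G) hx x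

lemma setDist_le_setDist_add_dist (hconn : G.Connected) (hS : S.Nonempty) (x y : V) :
    setDist G S y ≤ setDist G S x + G.dist x y := by
  obtain ⟨s, hs, hsx⟩ := exists_mem_dist_eq_setDist (G := G) hS x
  calc setDist G S y ≤ G.dist s y := setDist_le_dist hs y
    _ ≤ G.dist s x + G.dist x y := hconn.dist_triangle
    _ = setDist G S x + G.dist x y := by rw [hsx]

lemma setDist_insert [DecidableEq V] (hS : S.Nonempty) (v x : V) :
    setDist G (insert v S) x = min (G.dist v x) (setDist G S x) := by
  apply le_antisymm
  · apply le_min (setDist_le_dist (mem_insert_self v S) x)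
    obtain ⟨s, hs, hsx⟩ := exists_mem_dist_eq_setDist (G := G) hS x
    exact hsx ▸ setDist_le_dist (mem_insert_of_mem hs) x
  · obtain ⟨s, hs, hsx⟩ := exists_mem_dist_eq_setDist (G := G) (insert_nonempty v S) x
    rw [← hsx]
    rcases mem_insert.mp hs with rfl | hs
    · exact min_le_left _ _
    · exact (min_le_right _ _).trans (setDist_le_dist hs x)

lemma farness_eq_sum_setDist [Fintype V] [DecidableEq V] :
    farness G S = ∑ x, setDist G S x :=
  sum_subset (subset_univ _) fun _ _ hx => setDist_eq_zero_of_mem (notMem_compl.mp hx)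

end SetDist

section BFS

variable {V : Type*} {G : SimpleGraph V} {S : Finset V}
  (hconn : G.Connected) (hS : S.Nonempty)
include hconn hS

lemma setDist_eq_add_dist_of_reflTransGen {a b : V}
    (h : Relation.ReflTransGen (bfsEdge G S) a b) :
    setDist G S b = setDist G S a + G.dist a b := by
  induction h with
  | refl => simp
  | @tail b c _ hbc ih =>
    have hac : G.dist a c ≤ G.dist a b + 1 :=
      hconn.dist_triangle.trans (by rw [dist_eq_one_iff_adj.mpr hbc.1])
    have hc := setDist_le_setDist_add_dist hconn hS a c
    have hbc_level := hbc.2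
    omega

lemma reflTransGen_bfsEdge_of_walk {a b : V} (p : G.Walk a b)
    (h : setDist G S b = setDist G S a + p.length) :
    Relation.ReflTransGen (bfsEdge G S) a b := by
  induction p with
  | nil => exact .refl
  | @cons a c b hac q ih =>
    rw [Walk.length_cons] at h
    have hc := setDist_le_setDist_add_dist hconn hS a c
    have hb := setDist_le_setDist_add_dist hconn hS c b
    rw [dist_eq_one_iff_adj.mpr hac] at hc
    have hq := dist_le q
    exact .head ⟨hac, by omega⟩ (ih (by omega))

lemma mem_reach_iff {v x : V} :
    x ∈ reach G S v ↔ setDist G S x = setDist G S v + G.dist v x := by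
  refine ⟨setDist_eq_add_dist_of_reflTransGen hconn hS, fun h => ?_⟩
  obtain ⟨p, hp⟩ := hconn.exists_walk_length_eq_dist v x
  exact reflTransGen_bfsEdge_of_walk hconn hS p (hp ▸ h)

open scoped Classical in
lemma setDist_sub_setDist_insert [DecidableEq V] {v : V} (hdist : setDist G S v = 1) (x : V) :
    (setDist G S x : ℤ) - setDist G (insert v S) x = if x ∈ reach G S v then 1 else 0 := by
  have hle := setDist_le_setDist_add_dist hconn hS v x
  rw [setDist_insert hS, mem_reach_iff hconn hS, hdist]
  split_ifs with h <;> omega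

end BFS

theorem stmt1_general {V : Type*} [Fintype V] [DecidableEq V] (G : SimpleGraph V)
    (hconn : G.Connected) (S : Finset V) (hS : S.Nonempty)
    (v : V) (hdist : setDist G S v = 1) :
    (farness G S : ℤ) - farness G (insert v S) =
        ((reach G S v).ncard : ℤ) * setDist G S v ∧
      (farness G S : ℤ) - farness G (insert v S) = (reach G S v).ncard := by
  classical
  have hdrop : (farness G S : ℤ) - farness G (insert v S) = (reach G S v).ncard := by
    rw [farness_eq_sum_setDist, farness_eq_sum_setDist, Nat.cast_sum, Nat.cast_sum,
      ← sum_sub_distrib]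
    simp only [setDist_sub_setDist_insert hconn hS hdist]
    rw [sum_boole, Set.filter_mem_univ_eq_toFinset, Set.ncard_eq_toFinset_card']
  exact ⟨by rw [hdrop, hdist, Nat.cast_one, mul_one], hdrop⟩

theorem stmt1 {V : Type*} [Fintype V] [DecidableEq V] (G : SimpleGraph V)
    (hconn : G.Connected) (S : Finset V) (hS : S.Nonempty)
    (v : V) (hv : v ∉ S) (hdist : setDist G S v = 1) :
    (farness G S : ℤ) - farness G (insert v S) =
        ((reach G S v).ncard : ℤ) * setDist G S v ∧
      (farness G S : ℤ) - farness G (insert v S) = (reach G S v).ncard :=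
  stmt1_general G hconn S hS v hdist
end

section
/- The farness function f(S) = Σ_{x ∈ V\S} dist(S,x) on nonempty subsets of a finite connected positively weighted graph is supermodular: for all nonempty S ⊆ T ⊆ V and v ∈ V \ T, f(S) − f(S∪{v}) ≥ f(T) − f(T∪{v}). -/
open SimpleGraph Finset

/- Adding `v` lowers the distance to `x` from `dist(S,x)` to `min(dist(S,x), dist(v,x))`; this drop
`dist(S,x) - min(dist(S,x), dist(v,x))` is nonnegative and antitone in `S`, since `a ↦ a - min a c`
is monotone. Summed over the vertices outside `S ∪ {v}` (fewer of them for larger `S`), together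
with the term `dist(S,v)` lost when `v` itself leaves the sum, this is `f(S) - f(S ∪ {v})`. -/

section SetDist

variable {V : Type*} (G : SimpleGraph V) (w : V → V → ℝ)

lemma wsetDist_eq_min' {S : Finset V} (hS : S.Nonempty) (x : V) :
    wsetDist G w S x = (S.image (wdist G w · x)).min' (hS.image _) := by
  have hset : {r | ∃ s ∈ S, wdist G w s x = r} = ↑(S.image (wdist G w · x)) := by
    ext r; simp
  rw [wsetDist, hset, (hS.image _).csInf_eq_min']

lemma wsetDist_anti {S T : Finset V} (hS : S.Nonempty) (hST : S ⊆ T) (x : V) :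
    wsetDist G w T x ≤ wsetDist G w S x := by
  rw [wsetDist_eq_min' G w hS, wsetDist_eq_min' G w (hS.mono hST)]
  exact min'_subset _ (image_subset_image hST)

lemma wsetDist_insert [DecidableEq V] {S : Finset V} (hS : S.Nonempty) (v x : V) :
    wsetDist G w (insert v S) x = min (wsetDist G w S x) (wdist G w v x) := by
  rw [wsetDist_eq_min' G w (S.insert_nonempty v), wsetDist_eq_min' G w hS]
  simp only [image_insert]
  exact (min'_insert _ _ _).trans (min_comm _ _)

noncomputable def wsetDistDrop (S : Finset V) (v x : V) : ℝ :=
  wsetDist G w S x - min (wsetDist G w S x) (wdist G w v x)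

lemma wsetDistDrop_nonneg (S : Finset V) (v x : V) : 0 ≤ wsetDistDrop G w S v x :=
  sub_nonneg.mpr (min_le_left _ _)

lemma wsetDistDrop_anti {S T : Finset V} (hS : S.Nonempty) (hST : S ⊆ T) (v x : V) :
    wsetDistDrop G w T v x ≤ wsetDistDrop G w S v x := by
  have hmono : Monotone fun a : ℝ => a - min a (wdist G w v x) := by
    intro a b hab
    simp only [min_def]
    split_ifs <;> linarith
  exact hmono (wsetDist_anti G w hS hST x)

lemma wFarness_sub_wFarness_insert [Fintype V] [DecidableEq V] {S : Finset V}
    (hS : S.Nonempty) {v : V} (hv : v ∉ S) :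
    wFarness G w S - wFarness G w (insert v S) =
      wsetDist G w S v + ∑ x ∈ Sᶜ.erase v, wsetDistDrop G w S v x := by
  have hS_split : wFarness G w S = wsetDist G w S v + ∑ x ∈ Sᶜ.erase v, wsetDist G w S x := by
    rw [wFarness, ← add_sum_erase _ _ (mem_compl.mpr hv)]
  have hinsert : wFarness G w (insert v S) =
      ∑ x ∈ Sᶜ.erase v, min (wsetDist G w S x) (wdist G w v x) := by
    rw [wFarness, compl_insert]
    exact sum_congr rfl fun x _ => wsetDist_insert G w hS v x
  rw [hS_split, hinsert, add_sub_assoc, ← sum_sub_distrib]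
  rfl

end SetDist

theorem stmt10_general {V : Type*} [Fintype V] [DecidableEq V] (G : SimpleGraph V)
    (w : V → V → ℝ)
    (S T : Finset V) (hS : S.Nonempty) (hST : S ⊆ T) (v : V) (hv : v ∉ T) :
    wFarness G w S - wFarness G w (insert v S) ≥
      wFarness G w T - wFarness G w (insert v T) := by
  rw [wFarness_sub_wFarness_insert G w hS (fun h => hv (hST h)),
    wFarness_sub_wFarness_insert G w (hS.mono hST) hv]
  gcongr ?_ + ?_
  · exact wsetDist_anti G w hS hST v
  · calc ∑ x ∈ Tᶜ.erase v, wsetDistDrop G w T v x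
        ≤ ∑ x ∈ Tᶜ.erase v, wsetDistDrop G w S v x :=
          sum_le_sum fun x _ => wsetDistDrop_anti G w hS hST v x
      _ ≤ ∑ x ∈ Sᶜ.erase v, wsetDistDrop G w S v x :=
          sum_le_sum_of_subset_of_nonneg (erase_subset_erase _ (compl_subset_compl.mpr hST))
            fun x _ _ => wsetDistDrop_nonneg G w S v x

theorem stmt10 {V : Type*} [Fintype V] [DecidableEq V] (G : SimpleGraph V)
    (hconn : G.Connected) (w : V → V → ℝ)
    (hpos : ∀ x y, G.Adj x y → 0 < w x y) (hsym : ∀ x y, w x y = w y x)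
    (S T : Finset V) (hS : S.Nonempty) (hST : S ⊆ T) (v : V) (hv : v ∉ T) :
    wFarness G w S - wFarness G w (insert v S) ≥
      wFarness G w T - wFarness G w (insert v T) :=
  stmt10_general G w S T hS hST v hv
end
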